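/- arXiv:2305.09958 — 4 statements merged into one kernel-verified Lean document; each statement's English description precedes it below -/
import Mathlib

section
/- The SimRank recursion on a finite graph has a unique solution S with all entries in [0,1]. -/
open Matrix BigOperators Finset

variable {V : Type*} [Fintype V] [DecidableEq V]

/-- Random-walk transition matrix `P = D⁻¹ A`. -/
noncomputable def walkP (G : SimpleGraph V) [DecidableRel G.Adj] : Matrix V V ℝ :=
  fun u v => if G.Adj u v then (1 : ℝ) / (G.degree u) else 0

/-- `S` satisfies the SimRank recursion with decay `c`. -/
def IsSimRank (G : SimpleGraph V) [DecidableRel G.Adj] (c : ℝ) (S : Matrix V V ℝ) : Prop :=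
  (∀ u, S u u = 1) ∧ ∀ u v, u ≠ v → S u v =
    c / ((G.degree u : ℝ) * (G.degree v : ℝ)) *
      ∑ u' ∈ G.neighborFinset u, ∑ v' ∈ G.neighborFinset v, S u' v'

/-! The SimRank recursion says that `S` is a fixed point of the map `simRankMap G c`, which
replaces each off-diagonal entry by `c` times the average of `S` over `N(u) × N(v)`. An average
of entries bounded by `M` is bounded by `M`, so this map is a `c`-contraction in the sup norm and
preserves the closed set of matrices with entries in `[0,1]`. Banach's theorem gives a unique
fixed point, and the limit of the iterates from `0` lies in `[0,1]`. -/

theorem ContractingWith.fixedPoint_mem_of_mapsTo {α : Type*} [MetricSpace α] [CompleteSpace α]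
    [Nonempty α] {K : NNReal} {f : α → α} (hf : ContractingWith K f) {s : Set α}
    (hs : IsClosed s) (hsf : Set.MapsTo f s s) {x : α} (hx : x ∈ s) :
    fixedPoint f hf ∈ s :=
  hs.mem_of_tendsto (hf.tendsto_iterate_fixedPoint x)
    (Filter.Eventually.of_forall fun n => hsf.iterate n hx)

theorem abs_div_card_mul_sum_sum_le {α β : Type*} {s : Finset α} {t : Finset β}
    {f : α → β → ℝ} {c M : ℝ} (hc : 0 ≤ c) (hM : 0 ≤ M)
    (hf : ∀ i ∈ s, ∀ j ∈ t, |f i j| ≤ M) :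
    |c / (#s * #t) * ∑ i ∈ s, ∑ j ∈ t, f i j| ≤ c * M := by
  have hsum : |∑ i ∈ s, ∑ j ∈ t, f i j| ≤ #s * #t * M := by
    rw [← sum_product' (f := f)]
    calc |∑ p ∈ s ×ˢ t, f p.1 p.2| ≤ ∑ p ∈ s ×ˢ t, |f p.1 p.2| := abs_sum_le_sum_abs _ _
      _ ≤ #(s ×ˢ t) • M := sum_le_card_nsmul _ _ _ fun p hp =>
          hf p.1 (mem_product.1 hp).1 p.2 (mem_product.1 hp).2
      _ = #s * #t * M := by rw [card_product, nsmul_eq_mul]; push_cast; ring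
  rw [abs_mul, abs_of_nonneg (by positivity)]
  rcases (show (0 : ℝ) ≤ #s * #t by positivity).eq_or_lt with hst | hst
  · rw [← hst, div_zero, zero_mul]
    positivity
  · calc c / (#s * #t) * |∑ i ∈ s, ∑ j ∈ t, f i j| ≤ c / (#s * #t) * (#s * #t * M) :=
          mul_le_mul_of_nonneg_left hsum (by positivity)
      _ = c * M := by rw [← mul_assoc, div_mul_cancel₀ c hst.ne']

section SimRank

variable (G : SimpleGraph V) [DecidableRel G.Adj]

-- Stated on `V → V → ℝ`, since `Matrix V V ℝ` carries no metric instance.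
noncomputable def simRankMap (c : ℝ) (S : V → V → ℝ) : V → V → ℝ :=
  fun u v => if u = v then 1 else
    c / ((G.degree u : ℝ) * (G.degree v : ℝ)) *
      ∑ u' ∈ G.neighborFinset u, ∑ v' ∈ G.neighborFinset v, S u' v'

variable {c : ℝ}

theorem isSimRank_iff_isFixedPt (S : Matrix V V ℝ) :
    IsSimRank G c S ↔ Function.IsFixedPt (simRankMap G c) S := by
  constructor
  · rintro ⟨hdiag, hoff⟩
    funext u v
    by_cases huv : u = v
    · simp [simRankMap, huv, hdiag]
    · simp only [simRankMap, if_neg huv, hoff u v huv]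
  · intro h
    have hentry : ∀ u v, simRankMap G c S u v = S u v := fun u v => congrFun (congrFun h u) v
    refine ⟨fun u => by simpa [simRankMap] using (hentry u u).symm, fun u v huv => ?_⟩
    simpa [simRankMap, huv] using (hentry u v).symm

theorem abs_simRankMap_le (hc : 0 ≤ c) {S : V → V → ℝ} {M : ℝ} (hM : 0 ≤ M)
    (hS : ∀ u v, |S u v| ≤ M) {u v : V} (huv : u ≠ v) :
    |simRankMap G c S u v| ≤ c * M := by
  simp only [simRankMap, if_neg huv, ← G.card_neighborFinset_eq_degree]
  exact abs_div_card_mul_sum_sum_le hc hM fun i _ j _ => hS i j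

theorem dist_simRankMap_le (hc : 0 ≤ c) (S S' : V → V → ℝ) :
    dist (simRankMap G c S) (simRankMap G c S') ≤ c * dist S S' := by
  have hcd : 0 ≤ c * dist S S' := mul_nonneg hc dist_nonneg
  refine (dist_pi_le_iff hcd).2 fun u => (dist_pi_le_iff hcd).2 fun v => ?_
  by_cases huv : u = v
  · simp [simRankMap, huv, hcd]
  · have hsub : simRankMap G c S u v - simRankMap G c S' u v =
        simRankMap G c (S - S') u v := by
      simp only [simRankMap, if_neg huv, Pi.sub_apply, sum_sub_distrib, mul_sub]
    rw [Real.dist_eq, hsub]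
    refine abs_simRankMap_le G hc dist_nonneg (fun i j => ?_) huv
    calc |S i j - S' i j| = dist (S i j) (S' i j) := (Real.dist_eq _ _).symm
      _ ≤ dist S S' := (dist_le_pi_dist (S i) (S' i) j).trans (dist_le_pi_dist S S' i)

theorem contractingWith_simRankMap (hc : c ∈ Set.Ioo 0 1) :
    ContractingWith c.toNNReal (simRankMap G c) := by
  have hcoe : (c.toNNReal : ℝ) = c := Real.coe_toNNReal c hc.1.le
  refine ⟨by rw [← NNReal.coe_lt_one, hcoe]; exact hc.2, LipschitzWith.of_dist_le_mul ?_⟩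
  simpa only [hcoe] using dist_simRankMap_le G hc.1.le

theorem mapsTo_simRankMap_Icc (hc : c ∈ Set.Icc 0 1) :
    Set.MapsTo (simRankMap G c) (Set.Icc 0 1) (Set.Icc 0 1) := by
  rintro S ⟨hS0, hS1⟩
  refine ⟨fun u v => ?_, fun u v => ?_⟩ <;> by_cases huv : u = v
  · simp [simRankMap, huv]
  · simp only [simRankMap, if_neg huv, Pi.zero_apply]
    exact mul_nonneg (div_nonneg hc.1 (by positivity))
      (sum_nonneg fun i _ => sum_nonneg fun j _ => hS0 i j)
  · simp [simRankMap, huv]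
  · have hbound : ∀ i j, |S i j| ≤ 1 := fun i j => by
      rw [abs_of_nonneg (hS0 i j)]
      exact hS1 i j
    calc simRankMap G c S u v ≤ |simRankMap G c S u v| := le_abs_self _
      _ ≤ c * 1 := abs_simRankMap_le G hc.1 zero_le_one hbound huv
      _ ≤ 1 := by linarith [hc.2]

end SimRank

theorem stmt2_general (G : SimpleGraph V) [DecidableRel G.Adj]
    (c : ℝ) (hc : c ∈ Set.Ioo (0:ℝ) 1) :
    (∃! S : Matrix V V ℝ, IsSimRank G c S) ∧
    ∀ S : Matrix V V ℝ, IsSimRank G c S → ∀ u v, S u v ∈ Set.Icc (0:ℝ) 1 := by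
  have hT := contractingWith_simRankMap G hc
  have hunique : ∀ S, IsSimRank G c S → S = ContractingWith.fixedPoint _ hT := fun S hS =>
    hT.fixedPoint_unique ((isSimRank_iff_isFixedPt G S).1 hS)
  have hmem : ContractingWith.fixedPoint _ hT ∈ Set.Icc 0 1 :=
    hT.fixedPoint_mem_of_mapsTo isClosed_Icc
      (mapsTo_simRankMap_Icc G (Set.Ioo_subset_Icc_self hc)) (x := 0) ⟨le_rfl, zero_le_one⟩
  refine ⟨⟨_, (isSimRank_iff_isFixedPt G _).2 hT.fixedPoint_isFixedPt, hunique⟩, ?_⟩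
  rintro S hS u v
  obtain rfl := hunique S hS
  exact ⟨hmem.1 u v, hmem.2 u v⟩

theorem stmt2 (G : SimpleGraph V) [DecidableRel G.Adj]
    (hdeg : ∀ v : V, 0 < G.degree v) (c : ℝ) (hc : c ∈ Set.Ioo (0:ℝ) 1) :
    (∃! S : Matrix V V ℝ, IsSimRank G c S) ∧
    ∀ S : Matrix V V ℝ, IsSimRank G c S → ∀ u v, S u v ∈ Set.Icc (0:ℝ) 1 :=
  stmt2_general G c hc
end

section
/- Define the SimRank iteration by S^{(0)}(u,v) = [u=v] and S^{(k+1)}(u,v) = 1 if u=v, and (c/(|N(u)||N(v)|)) Σ_{u'∈N(u),v'∈N(v)} S^{(k)}(u',v') otherwise. Then for all k, the max-norm error satisfies ‖S^{(k)} − S‖_max ≤ c^k, where S is the exact SimRank matrix. In particular, to achieve absolute error at most ε it suffices to take k ≥ ⌈log_c ε⌉ iterations. -/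
open Matrix BigOperators Finset

variable {V : Type*} [Fintype V] [DecidableEq V]

/-- The SimRank fixed-point iteration starting from the identity. -/
noncomputable def simIter (G : SimpleGraph V) [DecidableRel G.Adj] (c : ℝ) : ℕ → Matrix V V ℝ
  | 0 => fun u v => if u = v then 1 else 0
  | (k + 1) => fun u v => if u = v then 1 else
      c / ((G.degree u : ℝ) * (G.degree v : ℝ)) *
        ∑ u' ∈ G.neighborFinset u, ∑ v' ∈ G.neighborFinset v, simIter G c k u' v'

private lemma key_bound (G : SimpleGraph V) [DecidableRel G.Adj]
    (hdeg : ∀ v : V, 0 < G.degree v) {c : ℝ} (hc0 : 0 ≤ c) (u v : V)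
    (X : V → V → ℝ) {B : ℝ} (hB : ∀ a b, |X a b| ≤ B) :
    |c / ((G.degree u : ℝ) * (G.degree v : ℝ)) *
      ∑ u' ∈ G.neighborFinset u, ∑ v' ∈ G.neighborFinset v, X u' v'| ≤ c * B := by
  have hdu : (0:ℝ) < G.degree u := by exact_mod_cast hdeg u
  have hdv : (0:ℝ) < G.degree v := by exact_mod_cast hdeg v
  have hsum : |∑ u' ∈ G.neighborFinset u, ∑ v' ∈ G.neighborFinset v, X u' v'|
      ≤ (G.degree u : ℝ) * (G.degree v : ℝ) * B := by
    calc |∑ u' ∈ G.neighborFinset u, ∑ v' ∈ G.neighborFinset v, X u' v'|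
        ≤ ∑ u' ∈ G.neighborFinset u, |∑ v' ∈ G.neighborFinset v, X u' v'| :=
          Finset.abs_sum_le_sum_abs _ _
      _ ≤ ∑ u' ∈ G.neighborFinset u, ∑ v' ∈ G.neighborFinset v, |X u' v'| :=
          Finset.sum_le_sum fun i _ => Finset.abs_sum_le_sum_abs _ _
      _ ≤ ∑ _u' ∈ G.neighborFinset u, ∑ _v' ∈ G.neighborFinset v, B :=
          Finset.sum_le_sum fun i _ => Finset.sum_le_sum fun j _ => hB i j
      _ = (G.degree u : ℝ) * (G.degree v : ℝ) * B := by
          simp [Finset.sum_const, G.card_neighborFinset_eq_degree]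
          ring
  have h1 : |c / ((G.degree u : ℝ) * (G.degree v : ℝ))|
      = c / ((G.degree u : ℝ) * (G.degree v : ℝ)) :=
    abs_of_nonneg (div_nonneg hc0 (by positivity))
  rw [abs_mul, h1]
  calc c / ((G.degree u : ℝ) * (G.degree v : ℝ)) *
        |∑ u' ∈ G.neighborFinset u, ∑ v' ∈ G.neighborFinset v, X u' v'|
      ≤ c / ((G.degree u : ℝ) * (G.degree v : ℝ)) *
        ((G.degree u : ℝ) * (G.degree v : ℝ) * B) :=
        mul_le_mul_of_nonneg_left hsum (div_nonneg hc0 (by positivity))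
    _ = c * B := by field_simp

theorem stmt3 (G : SimpleGraph V) [DecidableRel G.Adj]
    (hdeg : ∀ v : V, 0 < G.degree v) (c : ℝ) (hc : c ∈ Set.Ioo (0:ℝ) 1)
    (S : Matrix V V ℝ) (hS : IsSimRank G c S) :
    (∀ (k : ℕ) (u v : V), |simIter G c k u v - S u v| ≤ c ^ k) ∧
    ∀ ε : ℝ, 0 < ε → ∀ k : ℕ, ⌈Real.logb c ε⌉ ≤ (k : ℤ) →
      ∀ u v : V, |simIter G c k u v - S u v| ≤ ε := by
  obtain ⟨hdiag, hrec⟩ := hS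
  obtain ⟨hc0, hc1⟩ := hc
  have hSle : ∀ u v : V, |S u v| ≤ 1 := by
    intro u v
    have hne : (Finset.univ ×ˢ Finset.univ : Finset (V × V)).Nonempty := ⟨(u, v), by simp⟩
    set M := (Finset.univ ×ˢ Finset.univ : Finset (V × V)).sup' hne (fun p => |S p.1 p.2|)
      with hMdef
    obtain ⟨p, -, hp0⟩ := Finset.exists_mem_eq_sup' hne (fun p => |S p.1 p.2|)
    have hp : M = |S p.1 p.2| := hMdef.trans hp0
    have hle : ∀ a b : V, |S a b| ≤ M := fun a b =>
      Finset.le_sup' (f := fun p : V × V => |S p.1 p.2|) (by simp : (a, b) ∈ _)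
    have hM0 : 0 ≤ M := le_trans (abs_nonneg _) (hle u v)
    have hM1 : M ≤ 1 := by
      rcases eq_or_ne p.1 p.2 with h | h
      · rw [hp, h, hdiag]; norm_num
      · have hb := key_bound G hdeg hc0.le p.1 p.2 (fun a b => S a b) hle
        rw [← hrec p.1 p.2 h] at hb
        nlinarith [hp, hb]
    exact le_trans (hle u v) hM1
  have main : ∀ (k : ℕ) (u v : V), |simIter G c k u v - S u v| ≤ c ^ k := by
    intro k
    induction k with
    | zero =>
      intro u v
      rcases eq_or_ne u v with h | h
      · subst h; simp [simIter, hdiag]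
      · simpa [simIter, h, abs_sub_comm] using hSle u v
    | succ k ih =>
      intro u v
      rcases eq_or_ne u v with h | h
      · subst h; simp [simIter, hdiag]; positivity
      · have heq : simIter G c (k + 1) u v - S u v =
            c / ((G.degree u : ℝ) * (G.degree v : ℝ)) *
              ∑ u' ∈ G.neighborFinset u, ∑ v' ∈ G.neighborFinset v,
                (simIter G c k u' v' - S u' v') := by
          rw [hrec u v h]
          simp only [simIter, if_neg h, Finset.sum_sub_distrib, mul_sub]
        rw [heq, pow_succ']
        exact key_bound G hdeg hc0.le u v _ ih
  refine ⟨main, fun ε hε k hk u v => ?_⟩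
  refine (main k u v).trans ?_
  have hlog : Real.logb c ε ≤ (k : ℝ) := by
    have := Int.le_ceil (Real.logb c ε)
    exact this.trans (by exact_mod_cast hk)
  calc (c : ℝ) ^ k = c ^ (k : ℝ) := (Real.rpow_natCast c k).symm
    _ ≤ c ^ Real.logb c ε := Real.rpow_le_rpow_of_exponent_ge hc0 hc1.le hlog
    _ = ε := Real.rpow_logb hc0 hc1.ne hε
end

section
/- If matrices S* ∈ ℝ^{n×n} and H ∈ ℝ^{n×d} both have the grouping effect with respect to a pair (u,v) — i.e., ‖S*_{u,:} − S*_{v,:}‖_2 ≤ ε₁ and ‖H_{u,:} − H_{v,:}‖_∞ ≤ ε₂ — then Z = α·S*·H + (1−αc)·H satisfies, for every column p, |Z(u,p) − Z(v,p)| ≤ α·‖H_{:,p}‖_2·ε₁ + (1−αc)·ε₂, where α ∈ [0,1] and c ∈ (0,1). -/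
open Matrix BigOperators Finset

theorem stmt7 {n d : Type*} [Fintype n] [Fintype d]
    (Sstar : Matrix n n ℝ) (H : Matrix n d ℝ) (α c ε₁ ε₂ : ℝ)
    (hα : α ∈ Set.Icc (0:ℝ) 1) (hc : c ∈ Set.Ioo (0:ℝ) 1) (u v : n)
    (h1 : Real.sqrt (∑ x, (Sstar u x - Sstar v x) ^ 2) ≤ ε₁)
    (h2 : ∀ p, |H u p - H v p| ≤ ε₂)
    (Z : Matrix n d ℝ) (hZ : Z = α • (Sstar * H) + (1 - α * c) • H) :
    ∀ p : d, |Z u p - Z v p| ≤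
      α * Real.sqrt (∑ x, (H x p) ^ 2) * ε₁ + (1 - α * c) * ε₂ := by
  intro p
  obtain ⟨hα0, hα1⟩ := hα
  obtain ⟨hc0, hc1⟩ := hc
  have hαc : 0 ≤ 1 - α * c := by nlinarith
  have hε₁ : 0 ≤ ε₁ := le_trans (Real.sqrt_nonneg _) h1
  have hZup : Z u p - Z v p =
      α * (∑ x, (Sstar u x - Sstar v x) * H x p) + (1 - α * c) * (H u p - H v p) := by
    have key : (∑ x, α * ((Sstar u x - Sstar v x) * H x p))
        = (∑ x, α * (Sstar u x * H x p)) - ∑ x, α * (Sstar v x * H x p) := by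
      rw [← Finset.sum_sub_distrib]
      exact Finset.sum_congr rfl fun x _ => by ring
    subst hZ
    simp only [Matrix.add_apply, Matrix.smul_apply, Matrix.mul_apply, smul_eq_mul,
      Finset.mul_sum]
    rw [key]
    ring
  rw [hZup]
  have hCS : |∑ x, (Sstar u x - Sstar v x) * H x p| ≤
      Real.sqrt (∑ x, (Sstar u x - Sstar v x) ^ 2) * Real.sqrt (∑ x, (H x p) ^ 2) := by
    rw [← Real.sqrt_mul (by positivity), Real.le_sqrt (abs_nonneg _), sq_abs]
    all_goals first
      | exact Finset.sum_mul_sq_le_sq_mul_sq _ _ _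
      | positivity
  calc |α * (∑ x, (Sstar u x - Sstar v x) * H x p) + (1 - α * c) * (H u p - H v p)|
      ≤ |α * (∑ x, (Sstar u x - Sstar v x) * H x p)| + |(1 - α * c) * (H u p - H v p)| :=
        abs_add_le _ _
    _ = α * |∑ x, (Sstar u x - Sstar v x) * H x p| + (1 - α * c) * |H u p - H v p| := by
        rw [abs_mul, abs_mul, abs_of_nonneg hα0, abs_of_nonneg hαc]
    _ ≤ α * (Real.sqrt (∑ x, (Sstar u x - Sstar v x) ^ 2) * Real.sqrt (∑ x, (H x p) ^ 2))
          + (1 - α * c) * ε₂ := by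
        gcongr
        exact h2 p
    _ ≤ α * Real.sqrt (∑ x, (H x p) ^ 2) * ε₁ + (1 - α * c) * ε₂ := by
        have := Real.sqrt_nonneg (∑ x, (H x p) ^ 2)
        nlinarith [mul_le_mul_of_nonneg_right h1 this]
end

section
/- The map T on n×n matrices defined by (T(S))(u,u) = 1 and (T(S))(u,v) = (c/(|N(u)||N(v)|)) Σ_{u'∈N(u),v'∈N(v)} S(u',v') for u≠v is a contraction with Lipschitz constant c in the max-norm: ‖T(S₁) − T(S₂)‖_max ≤ c·‖S₁ − S₂‖_max. -/
open Matrix BigOperators Finset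

variable {V : Type*} [Fintype V] [DecidableEq V]

/-- The SimRank update operator. -/
noncomputable def Tmap (G : SimpleGraph V) [DecidableRel G.Adj] (c : ℝ) (S : Matrix V V ℝ) :
    Matrix V V ℝ := fun u v => if u = v then 1 else
  c / ((G.degree u : ℝ) * (G.degree v : ℝ)) *
    ∑ u' ∈ G.neighborFinset u, ∑ v' ∈ G.neighborFinset v, S u' v'

section DoubleAverage

variable {𝕜 α β : Type*} [Field 𝕜] [LinearOrder 𝕜] [IsStrictOrderedRing 𝕜]
  {s : Finset α} {t : Finset β} {f : α → β → 𝕜} {M : 𝕜}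

theorem abs_sum_sum_le_card_mul_card_mul (h : ∀ i ∈ s, ∀ j ∈ t, |f i j| ≤ M) :
    |∑ i ∈ s, ∑ j ∈ t, f i j| ≤ #s * #t * M := by
  rw [← Finset.sum_product' (f := f)]
  calc |∑ p ∈ s ×ˢ t, f p.1 p.2|
      ≤ ∑ p ∈ s ×ˢ t, |f p.1 p.2| := abs_sum_le_sum_abs _ _
    _ ≤ #(s ×ˢ t) • M := sum_le_card_nsmul _ _ _ fun p hp =>
        h p.1 (mem_product.1 hp).1 p.2 (mem_product.1 hp).2
    _ = #s * #t * M := by rw [card_product, nsmul_eq_mul]; push_cast; ring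

/-- If `#s * #t = 0`, the left side is `0` because `c / 0 = 0`. -/
theorem abs_div_card_mul_card_mul_sum_sum_le {c : 𝕜} (hc : 0 ≤ c) (hM : 0 ≤ M)
    (h : ∀ i ∈ s, ∀ j ∈ t, |f i j| ≤ M) :
    |c / (#s * #t) * ∑ i ∈ s, ∑ j ∈ t, f i j| ≤ c * M := by
  have hn : (0 : 𝕜) ≤ #s * #t := by positivity
  calc |c / (#s * #t) * ∑ i ∈ s, ∑ j ∈ t, f i j|
      = c / (#s * #t) * |∑ i ∈ s, ∑ j ∈ t, f i j| := by
        rw [abs_mul, abs_of_nonneg (div_nonneg hc hn)]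
    _ ≤ c / (#s * #t) * (#s * #t * M) :=
        mul_le_mul_of_nonneg_left (abs_sum_sum_le_card_mul_card_mul h) (div_nonneg hc hn)
    _ = c * M * ((#s * #t) / (#s * #t)) := by ring
    _ ≤ c * M := mul_le_of_le_one_right (mul_nonneg hc hM) (div_self_le_one _)

end DoubleAverage

section SimRank

variable (G : SimpleGraph V) [DecidableRel G.Adj]

theorem Tmap_apply_self (c : ℝ) (S : Matrix V V ℝ) (u : V) : Tmap G c S u u = 1 := if_pos rfl

theorem Tmap_sub_Tmap_apply_of_ne (c : ℝ) (S₁ S₂ : Matrix V V ℝ) {u v : V} (huv : u ≠ v) :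
    Tmap G c S₁ u v - Tmap G c S₂ u v =
      c / (#(G.neighborFinset u) * #(G.neighborFinset v)) *
        ∑ u' ∈ G.neighborFinset u, ∑ v' ∈ G.neighborFinset v, (S₁ u' v' - S₂ u' v') := by
  simp only [Tmap, if_neg huv, G.card_neighborFinset_eq_degree, sum_sub_distrib, mul_sub]

end SimRank

theorem stmt12_general (G : SimpleGraph V) [DecidableRel G.Adj]
    (c : ℝ) (hc : c ∈ Set.Ioo (0:ℝ) 1)
    (S₁ S₂ : Matrix V V ℝ) (M : ℝ) (h : ∀ u v, |S₁ u v - S₂ u v| ≤ M) :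
    ∀ u v : V, |Tmap G c S₁ u v - Tmap G c S₂ u v| ≤ c * M := by
  intro u v
  have hM : 0 ≤ M := (abs_nonneg _).trans (h u v)
  by_cases huv : u = v
  · subst huv
    rw [Tmap_apply_self, Tmap_apply_self, sub_self, abs_zero]
    exact mul_nonneg hc.1.le hM
  · rw [Tmap_sub_Tmap_apply_of_ne G c S₁ S₂ huv]
    exact abs_div_card_mul_card_mul_sum_sum_le hc.1.le hM fun i _ j _ => h i j

theorem stmt12 (G : SimpleGraph V) [DecidableRel G.Adj]
    (hdeg : ∀ v : V, 0 < G.degree v) (c : ℝ) (hc : c ∈ Set.Ioo (0:ℝ) 1)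
    (S₁ S₂ : Matrix V V ℝ) (M : ℝ) (h : ∀ u v, |S₁ u v - S₂ u v| ≤ M) :
    ∀ u v : V, |Tmap G c S₁ u v - Tmap G c S₂ u v| ≤ c * M :=
  stmt12_general G c hc S₁ S₂ M h
end
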